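/- arXiv:1710.06562 — 7 statements merged into one kernel-verified Lean document; each statement's English description precedes it below -/
import Mathlib

section
/- Let T > 0 and let f : [0,T] → ℝ be continuous with f(0) ≥ 0. Then the function m_f(t) := sup_{0 ≤ s ≤ t} max(−f(s), 0) is continuous and nondecreasing with m_f(0) = 0, the function x_f := f + m_f satisfies x_f(t) ≥ 0 for all t ∈ [0,T], and the Lebesgue–Stieltjes measure induced by m_f assigns zero mass to the set {s ∈ [0,T] : x_f(s) > 0}. -/
/-
`m_f` is the running maximum of the continuous function `max (-f) 0`, hence continuous and
nondecreasing, and `x_f ≥ 0` because `-f t ≤ m_f t`. Moreover `m_f` increases only at zeros of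
`x_f`: if `m_f t < m_f t'`, a maximiser `u` of `max (-f) 0` on `[0, t']` lies in `(t, t']` and
satisfies `-f u = m_f t' ≥ m_f u ≥ -f u`. As `x_f` is continuous, each point where `x_f > 0` has a
neighbourhood on which `m_f` does not increase, so `dm_f` vanishes there, and second countability
of `ℝ` turns these local statements into the global one.
-/

open Set MeasureTheory

noncomputable def mf (f : ℝ → ℝ) (t : ℝ) : ℝ :=
  sSup ((fun s => max (-f s) 0) '' Set.Icc 0 t)

section RunningSup

variable {α β : Type*} [ConditionallyCompleteLinearOrder α] [TopologicalSpace α] [OrderTopology α]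
  [ConditionallyCompleteLinearOrder β] [TopologicalSpace β] [OrderTopology β]
  {g : α → β} {a b t : α}

lemma le_sSup_image_Icc (hg : ContinuousOn g (Icc a b)) (ht : t ∈ Icc a b) {u : α}
    (hu : u ∈ Icc a t) : g u ≤ sSup (g '' Icc a t) :=
  le_csSup (isCompact_Icc.bddAbove_image (hg.mono (Icc_subset_Icc_right ht.2)))
    (mem_image_of_mem g hu)

lemma monotoneOn_sSup_image_Icc (hg : ContinuousOn g (Icc a b)) :
    MonotoneOn (fun t => sSup (g '' Icc a t)) (Icc a b) := fun _ hs _ ht hst =>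
  csSup_le_csSup (isCompact_Icc.bddAbove_image (hg.mono (Icc_subset_Icc_right ht.2)))
    ((nonempty_Icc.2 hs.1).image g) (image_mono (Icc_subset_Icc_right hst))

lemma exists_eq_sSup_image_Icc (hg : ContinuousOn g (Icc a b)) (ht : t ∈ Icc a b) :
    ∃ u ∈ Icc a t, g u = sSup (g '' Icc a t) := by
  obtain ⟨u, hu, h⟩ := isCompact_Icc.exists_sSup_image_eq (nonempty_Icc.2 ht.1)
    (hg.mono (Icc_subset_Icc_right ht.2))
  exact ⟨u, hu, h.symm⟩

lemma continuousOn_sSup_image_Icc (hab : a ≤ b) (hg : ContinuousOn g (Icc a b)) :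
    ContinuousOn (fun t => sSup (g '' Icc a t)) (Icc a b) := by
  -- on `Icc a b`, `sSup (g '' Icc a t)` is the supremum over the fixed compact `Icc a b` of
  -- `u ↦ G (min u t)`, which is jointly continuous in `(t, u)`
  set G : α → β := fun u => g (projIcc a b hab u)
  have hG : Continuous G := hg.comp_continuous (continuous_subtype_val.comp continuous_projIcc)
    fun u => (projIcc a b hab u).2
  have hsup : Continuous fun t => sSup ((fun u => G (min u t)) '' Icc a b) :=
    isCompact_Icc.continuous_sSup (hG.comp (continuous_snd.min continuous_fst))
  refine hsup.continuousOn.congr fun t ht => congrArg sSup ?_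
  ext y
  constructor
  · rintro ⟨u, hu, rfl⟩
    refine ⟨u, ⟨hu.1, hu.2.trans ht.2⟩, ?_⟩
    simp only [G, min_eq_left hu.2, projIcc_of_mem hab ⟨hu.1, hu.2.trans ht.2⟩]
  · rintro ⟨u, hu, rfl⟩
    refine ⟨min u t, ⟨le_min hu.1 ht.1, min_le_right u t⟩, ?_⟩
    simp only [G, projIcc_of_mem hab ⟨le_min hu.1 ht.1, (min_le_right u t).trans ht.2⟩]

end RunningSup

lemma StieltjesFunction.measure_eq_zero_of_forall_exists_Ioo (S : StieltjesFunction ℝ)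
    {A : Set ℝ} (h : ∀ x ∈ A, ∃ a b, x ∈ Ioo a b ∧ S b ≤ S a) : S.measure A = 0 := by
  refine measure_null_of_locally_null A fun x hx => ?_
  obtain ⟨a, b, hx, hba⟩ := h x hx
  refine ⟨Ioc a b, mem_nhdsWithin_of_mem_nhds
    (Filter.mem_of_superset (Ioo_mem_nhds hx.1 hx.2) Ioo_subset_Ioc_self), ?_⟩
  rwa [S.measure_Ioc, ENNReal.ofReal_eq_zero, sub_nonpos]

lemma exists_stieltjesFunction_eq_comp_clamp {F : ℝ → ℝ} {a b : ℝ} (hab : a ≤ b)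
    (hF_cont : ContinuousOn F (Icc a b)) (hF_mono : MonotoneOn F (Icc a b)) :
    ∃ S : StieltjesFunction ℝ, ∀ t, S t = F (min (max t a) b) := by
  have hclamp : ∀ t, min (max t a) b ∈ Icc a b := fun t =>
    ⟨le_min (le_max_right t a) hab, min_le_right _ b⟩
  exact ⟨{ toFun := fun t => F (min (max t a) b)
           mono' := fun s t hst => hF_mono (hclamp s) (hclamp t)
             (min_le_min_right b (max_le_max_right a hst))
           right_continuous' := fun t =>
             (hF_cont.comp_continuous (by fun_prop) hclamp).continuousWithinAt }, fun _ => rfl⟩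

section Reflection

variable {f : ℝ → ℝ} {T t t' : ℝ}

lemma continuousOn_max_neg_zero (hf : ContinuousOn f (Icc 0 T)) :
    ContinuousOn (fun s => max (-f s) 0) (Icc 0 T) :=
  hf.neg.sup continuousOn_const

lemma mf_zero (hf0 : 0 ≤ f 0) : mf f 0 = 0 := by
  simp [mf, neg_nonpos.2 hf0]

lemma neg_le_mf (hf : ContinuousOn f (Icc 0 T)) (ht : t ∈ Icc 0 T) : -f t ≤ mf f t :=
  (le_max_left _ _).trans
    (le_sSup_image_Icc (continuousOn_max_neg_zero hf) ht (right_mem_Icc.2 ht.1))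

lemma mf_nonneg (hf : ContinuousOn f (Icc 0 T)) (ht : t ∈ Icc 0 T) : 0 ≤ mf f t :=
  (le_max_right _ _).trans
    (le_sSup_image_Icc (continuousOn_max_neg_zero hf) ht (left_mem_Icc.2 ht.1))

lemma exists_add_mf_eq_zero_of_mf_lt (hf : ContinuousOn f (Icc 0 T)) (ht : t ∈ Icc 0 T)
    (ht' : t' ∈ Icc 0 T) (h : mf f t < mf f t') : ∃ u ∈ Icc t t', f u + mf f u = 0 := by
  have hg := continuousOn_max_neg_zero hf
  obtain ⟨u, hu, hmax⟩ : ∃ u ∈ Icc 0 t', max (-f u) 0 = mf f t' :=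
    exists_eq_sSup_image_Icc hg ht'
  have htu : t ≤ u := by
    by_contra! hut
    exact h.not_ge (hmax ▸ le_sSup_image_Icc hg ht ⟨hu.1, hut.le⟩)
  have hu' : u ∈ Icc 0 T := ⟨hu.1, hu.2.trans ht'.2⟩
  have hfu : -f u = mf f t' := by
    rcases max_choice (-f u) 0 with hc | hc <;> rw [hc] at hmax
    · exact hmax
    · linarith [mf_nonneg hf ht]
  have hmu : mf f u ≤ mf f t' := monotoneOn_sSup_image_Icc hg hu' ht' hu.2
  exact ⟨u, ⟨htu, hu.2⟩, by linarith [neg_le_mf hf hu']⟩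

lemma exists_mem_Ioo_mf_clamp_le (hf : ContinuousOn f (Icc 0 T)) {s : ℝ} (hs : s ∈ Icc 0 T)
    (hx : 0 < f s + mf f s) :
    ∃ a b, s ∈ Ioo a b ∧ mf f (min (max b 0) T) ≤ mf f (min (max a 0) T) := by
  have hcont : ContinuousOn (fun u => f u + mf f u) (Icc 0 T) :=
    hf.add (continuousOn_sSup_image_Icc (hs.1.trans hs.2) (continuousOn_max_neg_zero hf))
  obtain ⟨δ, hδ, hball⟩ := Metric.mem_nhdsWithin_iff.1 (hcont s hs (Ioi_mem_nhds hx))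
  refine ⟨s - δ / 2, s + δ / 2, ⟨by linarith, by linarith⟩, ?_⟩
  have hlo : s - δ / 2 ≤ min (max (s - δ / 2) 0) T := le_min (le_max_left _ _) (by linarith [hs.2])
  have hhi : min (max (s + δ / 2) 0) T ≤ s + δ / 2 :=
    min_le_of_left_le (max_le le_rfl (by linarith [hs.1]))
  have hclamp : ∀ t, min (max t 0) T ∈ Icc 0 T := fun t =>
    ⟨le_min (le_max_right t 0) (hs.1.trans hs.2), min_le_right _ T⟩
  by_contra! h
  obtain ⟨u, hu, hu0⟩ := exists_add_mf_eq_zero_of_mf_lt hf (hclamp _) (hclamp _) h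
  have hu_ball : u ∈ Metric.ball s δ := by
    rw [Metric.mem_ball, Real.dist_eq, abs_sub_lt_iff]
    constructor <;> linarith [hu.1, hu.2]
  have hpos : 0 < f u + mf f u := hball ⟨hu_ball, ⟨(hclamp _).1.trans hu.1, hu.2.trans (hclamp _).2⟩⟩
  exact hpos.ne' hu0

end Reflection

/-- Skorohod's lemma, existence part: `m_f` is continuous, nondecreasing, vanishes at `0`,
the reflected path `x_f = f + m_f` is nonnegative on `[0,T]`, and the Lebesgue–Stieltjes
measure induced by `m_f` assigns zero mass to `{s ∈ [0,T] : x_f(s) > 0}`. -/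
theorem stmt_0 (T : ℝ) (hT : 0 < T) (f : ℝ → ℝ)
    (hf : ContinuousOn f (Set.Icc 0 T)) (hf0 : 0 ≤ f 0) :
    ContinuousOn (mf f) (Set.Icc 0 T) ∧
    MonotoneOn (mf f) (Set.Icc 0 T) ∧
    mf f 0 = 0 ∧
    (∀ t ∈ Set.Icc 0 T, 0 ≤ f t + mf f t) ∧
    ∃ S : StieltjesFunction ℝ,
      (∀ t : ℝ, S t = mf f (min (max t 0) T)) ∧
      S.measure {s | s ∈ Set.Icc 0 T ∧ 0 < f s + mf f s} = 0 := by
  have hg := continuousOn_max_neg_zero hf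
  have hcont : ContinuousOn (mf f) (Icc 0 T) := continuousOn_sSup_image_Icc hT.le hg
  have hmono : MonotoneOn (mf f) (Icc 0 T) := monotoneOn_sSup_image_Icc hg
  obtain ⟨S, hS⟩ := exists_stieltjesFunction_eq_comp_clamp hT.le hcont hmono
  refine ⟨hcont, hmono, mf_zero hf0, fun t ht => by linarith [neg_le_mf hf ht], S, hS, ?_⟩
  refine S.measure_eq_zero_of_forall_exists_Ioo fun s ⟨hs, hx⟩ => ?_
  simpa only [hS] using exists_mem_Ioo_mf_clamp_le hf hs hx
end

section
/- Let T > 0 and let f : [0,T] → ℝ be continuous with f(0) ≥ 0. If m : [0,T] → ℝ is any continuous nondecreasing function with m(0) = 0 such that f(t) + m(t) ≥ 0 for all t ∈ [0,T] and the Lebesgue–Stieltjes measure induced by m assigns zero mass to {s ∈ [0,T] : f(s) + m(s) > 0}, then m(t) = sup_{0 ≤ s ≤ t} max(−f(s), 0) for all t ∈ [0,T]. -/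
open Set MeasureTheory

/-!
`m_f(t) ≤ m(t)` holds because `-f(s) ≤ m(s) ≤ m(t)` for `s ≤ t`. Conversely, since
`m(0) = 0 ≤ m_f(t)` and `m` is continuous, there is a last time `a ∈ [0, t]` with
`m(a) ≤ m_f(t)`. On `(a, t]` we have
`f + m > f + m_f ≥ 0`, so `dm` does not charge `(a, t]`, whence `m(t) = m(a) ≤ m_f(t)`.
-/

theorem StieltjesFunction.eq_of_measure_Ioc_eq_zero (S : StieltjesFunction ℝ) {a b : ℝ}
    (hab : a ≤ b) (h : S.measure (Ioc a b) = 0) : S b = S a := by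
  rw [S.measure_Ioc, ENNReal.ofReal_eq_zero] at h
  linarith [S.mono hab]

theorem ContinuousOn.exists_last_le {g : ℝ → ℝ} {a b c : ℝ} (hg : ContinuousOn g (Icc a b))
    (hab : a ≤ b) (hga : g a ≤ c) : ∃ x ∈ Icc a b, g x ≤ c ∧ ∀ s ∈ Ioc x b, c < g s := by
  set B := Icc a b ∩ g ⁻¹' Iic c
  have hB : IsClosed B := hg.preimage_isClosed_of_isClosed isClosed_Icc isClosed_Iic
  have hne : B.Nonempty := ⟨a, ⟨le_rfl, hab⟩, hga⟩
  have hbdd : BddAbove B := ⟨b, fun s hs => hs.1.2⟩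
  obtain ⟨hx, hgx⟩ := hB.csSup_mem hne hbdd
  refine ⟨sSup B, hx, hgx, fun s hs => not_le.mp fun hgs => ?_⟩
  exact (le_csSup hbdd ⟨⟨hx.1.trans hs.1.le, hs.2⟩, hgs⟩).not_gt hs.1

section ReflectionTerm

variable {f : ℝ → ℝ} {s t c : ℝ}

theorem bddAbove_reflection_image (hc : 0 ≤ c) (h : ∀ s ∈ Icc 0 t, -f s ≤ c) :
    BddAbove ((fun s => max (-f s) 0) '' Icc 0 t) :=
  ⟨c, by rintro _ ⟨s, hs, rfl⟩; exact max_le (h s hs) hc⟩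

theorem mf_le (ht : 0 ≤ t) (hc : 0 ≤ c) (h : ∀ s ∈ Icc 0 t, -f s ≤ c) : mf f t ≤ c :=
  csSup_le ⟨_, 0, ⟨le_rfl, ht⟩, rfl⟩ (by rintro _ ⟨s, hs, rfl⟩; exact max_le (h s hs) hc)

theorem le_mf (hbdd : BddAbove ((fun s => max (-f s) 0) '' Icc 0 t)) (hs : s ∈ Icc 0 t) :
    max (-f s) 0 ≤ mf f t :=
  le_csSup hbdd ⟨s, hs, rfl⟩

theorem mf_nonneg_s1 (hbdd : BddAbove ((fun s => max (-f s) 0) '' Icc 0 t)) (ht : 0 ≤ t) :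
    0 ≤ mf f t :=
  (le_max_right _ _).trans (le_mf hbdd ⟨le_rfl, ht⟩)

theorem neg_le_mf_s1 (hbdd : BddAbove ((fun s' => max (-f s') 0) '' Icc 0 s)) (hs : 0 ≤ s) :
    -f s ≤ mf f s :=
  (le_max_left _ _).trans (le_mf hbdd ⟨hs, le_rfl⟩)

theorem mf_mono (hbdd : BddAbove ((fun s' => max (-f s') 0) '' Icc 0 t)) (hs : 0 ≤ s)
    (hst : s ≤ t) : mf f s ≤ mf f t :=
  csSup_le_csSup hbdd ⟨_, 0, ⟨le_rfl, hs⟩, rfl⟩ (image_mono (Icc_subset_Icc_right hst))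

end ReflectionTerm

theorem stmt_1_general (T : ℝ) (f m : ℝ → ℝ)
    (hm : ContinuousOn m (Set.Icc 0 T))
    (hmono : MonotoneOn m (Set.Icc 0 T))
    (hm0 : m 0 = 0)
    (hpos : ∀ t ∈ Set.Icc 0 T, 0 ≤ f t + m t)
    (hflat : ∃ S : StieltjesFunction ℝ,
      (∀ t : ℝ, S t = m (min (max t 0) T)) ∧
      S.measure {s | s ∈ Set.Icc 0 T ∧ 0 < f s + m s} = 0) :
    ∀ t ∈ Set.Icc 0 T, m t = mf f t := by
  obtain ⟨S, hS, hSflat⟩ := hflat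
  intro t ht
  have hm_nonneg : ∀ u ∈ Icc 0 T, 0 ≤ m u := fun u hu =>
    hm0 ▸ hmono ⟨le_rfl, hu.1.trans hu.2⟩ hu hu.1
  have hneg : ∀ u ∈ Icc 0 T, ∀ s ∈ Icc 0 u, -f s ≤ m u := fun u hu s hs => by
    have hsT : s ∈ Icc 0 T := ⟨hs.1, hs.2.trans hu.2⟩
    linarith [hpos s hsT, hmono hsT hu hs.2]
  have hbdd : ∀ u ∈ Icc 0 T, BddAbove ((fun s => max (-f s) 0) '' Icc 0 u) := fun u hu =>
    bddAbove_reflection_image (hm_nonneg u hu) (hneg u hu)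
  refine le_antisymm ?_ (mf_le ht.1 (hm_nonneg t ht) (hneg t ht))
  obtain ⟨a, ha, hma, hlast⟩ := (hm.mono (Icc_subset_Icc_right ht.2)).exists_last_le ht.1
    (hm0.symm ▸ mf_nonneg_s1 (hbdd t ht) ht.1)
  have hsub : Ioc a t ⊆ {s | s ∈ Icc 0 T ∧ 0 < f s + m s} := fun s hs => by
    have hsT : s ∈ Icc 0 T := ⟨ha.1.trans hs.1.le, hs.2.trans ht.2⟩
    refine ⟨hsT, ?_⟩
    linarith [hlast s hs, mf_mono (hbdd t ht) hsT.1 hs.2, neg_le_mf_s1 (hbdd s hsT) hsT.1]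
  have hS_eq : ∀ u ∈ Icc 0 T, S u = m u := fun u hu => by
    rw [hS, max_eq_left hu.1, min_eq_left hu.2]
  have hta : S t = S a := S.eq_of_measure_Ioc_eq_zero ha.2 (measure_mono_null hsub hSflat)
  rw [hS_eq t ht, hS_eq a ⟨ha.1, ha.2.trans ht.2⟩] at hta
  exact hta ▸ hma

/-- Skorohod's lemma, uniqueness part: any continuous nondecreasing `m` with `m(0) = 0`,
keeping `f + m` nonnegative on `[0,T]`, whose induced Lebesgue–Stieltjes measure assigns
zero mass to `{s ∈ [0,T] : f(s) + m(s) > 0}`, must equal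
`m(t) = sup_{0 ≤ s ≤ t} max(-f(s), 0)` on `[0,T]`. -/
theorem stmt_1 (T : ℝ) (hT : 0 < T) (f m : ℝ → ℝ)
    (hf : ContinuousOn f (Set.Icc 0 T)) (hf0 : 0 ≤ f 0)
    (hm : ContinuousOn m (Set.Icc 0 T))
    (hmono : MonotoneOn m (Set.Icc 0 T))
    (hm0 : m 0 = 0)
    (hpos : ∀ t ∈ Set.Icc 0 T, 0 ≤ f t + m t)
    (hflat : ∃ S : StieltjesFunction ℝ,
      (∀ t : ℝ, S t = m (min (max t 0) T)) ∧
      S.measure {s | s ∈ Set.Icc 0 T ∧ 0 < f s + m s} = 0) :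
    ∀ t ∈ Set.Icc 0 T, m t = mf f t :=
  stmt_1_general T f m hm hmono hm0 hpos hflat
end

section
/- Time-shift property of the Skorohod solution: let T > 0, let f : [0,T] → ℝ be continuous with f(0) ≥ 0, and let 0 ≤ s ≤ t ≤ T. Define g : [0, T−s] → ℝ by g(u) := x_f(s) + f(s+u) − f(s). Then x_f(t) = x_g(t − s); that is, f(t) + sup_{0 ≤ r ≤ t} max(−f(r), 0) = g(t−s) + sup_{0 ≤ u ≤ t−s} max(−g(u), 0). -/
open Set

/-!
Write `m = m_f(s)` and `S = sup_{s ≤ r ≤ t} max(-f r, 0)`. Splitting `[0, t]` at `s` gives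
`m_f(t) = max m S`. Since `g(u) = m + f(s + u)` on `[0, t - s]` and `m ≥ 0`, the negative part
of `g(u)` is `max (max(-f(s+u), 0) - m) 0`, and this is a monotone continuous function of
`max(-f(s+u), 0)`, so it commutes with the supremum: `m_g(t - s) = max (S - m) 0`. The claim is
then the identity `max m S = m + max (S - m) 0`.
-/

section Skorohod

variable {f : ℝ → ℝ} {s t : ℝ}

lemma mf_nonneg_s2 (f : ℝ → ℝ) (t : ℝ) : 0 ≤ mf f t :=
  Real.sSup_nonneg (by rintro _ ⟨r, -, rfl⟩; exact le_max_right _ _)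

lemma isCompact_image_negPart_Icc (hf : ContinuousOn f (Icc s t)) :
    IsCompact ((fun r => max (-f r) 0) '' Icc s t) :=
  isCompact_Icc.image_of_continuousOn
    ((continuous_id.max continuous_const).comp_continuousOn hf.neg)

lemma mf_eq_max_sSup_Icc (hf : ContinuousOn f (Icc 0 t)) (hs : 0 ≤ s) (hst : s ≤ t) :
    mf f t = max (mf f s) (sSup ((fun r => max (-f r) 0) '' Icc s t)) := by
  have hA := isCompact_image_negPart_Icc (hf.mono (Icc_subset_Icc le_rfl hst))
  have hB := isCompact_image_negPart_Icc (hf.mono (Icc_subset_Icc hs le_rfl))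
  rw [mf, ← Icc_union_Icc_eq_Icc hs hst, image_union,
    csSup_union hA.bddAbove ((nonempty_Icc.2 hs).image _) hB.bddAbove
      ((nonempty_Icc.2 hst).image _), mf]

lemma max_eq_add_max_sub_zero (a b : ℝ) : max a b = a + max (b - a) 0 := by
  rw [← max_add_add_left, add_sub_cancel, add_zero, max_comm]

lemma max_neg_add_zero_eq (a : ℝ) {c : ℝ} (hc : 0 ≤ c) :
    max (-(c + a)) 0 = max (max (-a) 0 - c) 0 := by
  rcases le_total (-a) 0 with ha | ha
  · rw [max_eq_right ha, max_eq_right (by linarith), max_eq_right (by linarith)]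
  · rw [max_eq_left ha, neg_add, neg_add_eq_sub]

lemma mf_of_eq_add_shift (hf : ContinuousOn f (Icc s t)) (hst : s ≤ t) {c : ℝ} (hc : 0 ≤ c)
    {g : ℝ → ℝ} (hg : ∀ u ∈ Icc 0 (t - s), g u = c + f (s + u)) :
    mf g (t - s) = max (sSup ((fun r => max (-f r) 0) '' Icc s t) - c) 0 := by
  have himage : (fun u => max (-g u) 0) '' Icc 0 (t - s)
      = (fun x => max (x - c) 0) '' ((fun r => max (-f r) 0) '' Icc s t) := by
    have hIcc : Icc s t = (s + ·) '' Icc 0 (t - s) := by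
      rw [image_const_add_Icc, add_zero, add_sub_cancel]
    rw [hIcc, image_image, image_image]
    exact image_congr fun u hu => by rw [hg u hu, max_neg_add_zero_eq _ hc]
  have hmono : Monotone fun x : ℝ => max (x - c) 0 :=
    fun a b hab => max_le_max (sub_le_sub_right hab c) le_rfl
  have hB := isCompact_image_negPart_Icc hf
  rw [mf, himage, ← hmono.map_csSup_of_continuousAt
    ((continuous_sub_right c).max continuous_const).continuousAt
    ((nonempty_Icc.2 hst).image _) hB.bddAbove]

end Skorohod

theorem stmt_2_general (T : ℝ) (f : ℝ → ℝ)
    (hf : ContinuousOn f (Set.Icc 0 T))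
    (s t : ℝ) (hs : 0 ≤ s) (hst : s ≤ t) (htT : t ≤ T)
    (g : ℝ → ℝ)
    (hg : ∀ u ∈ Set.Icc 0 (T - s), g u = (f s + mf f s) + f (s + u) - f s) :
    f t + mf f t = g (t - s) + mf g (t - s) := by
  have hg' : ∀ u ∈ Icc 0 (t - s), g u = mf f s + f (s + u) := fun u hu => by
    rw [hg u ⟨hu.1, by linarith [hu.2]⟩]; ring
  have hgt : g (t - s) = mf f s + f t := by
    rw [hg' _ ⟨sub_nonneg.2 hst, le_rfl⟩, add_sub_cancel]
  rw [mf_eq_max_sSup_Icc (hf.mono (Icc_subset_Icc le_rfl htT)) hs hst,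
    mf_of_eq_add_shift (hf.mono (Icc_subset_Icc hs htT)) hst (mf_nonneg_s2 f s) hg', hgt,
    max_eq_add_max_sub_zero]
  ring

/-- Time-shift property of the Skorohod solution: with
`g(u) = x_f(s) + f(s+u) - f(s)` one has `x_f(t) = x_g(t-s)` for `0 ≤ s ≤ t ≤ T`. -/
theorem stmt_2 (T : ℝ) (hT : 0 < T) (f : ℝ → ℝ)
    (hf : ContinuousOn f (Set.Icc 0 T)) (hf0 : 0 ≤ f 0)
    (s t : ℝ) (hs : 0 ≤ s) (hst : s ≤ t) (htT : t ≤ T)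
    (g : ℝ → ℝ)
    (hg : ∀ u ∈ Set.Icc 0 (T - s), g u = (f s + mf f s) + f (s + u) - f s) :
    f t + mf f t = g (t - s) + mf g (t - s) :=
  stmt_2_general T f hf s t hs hst htT g hg
end

section
/- Uniqueness for the multiparticle Skorohod system: fix T > 0, an integer n ≥ 1, continuous functions f₁, …, f_n : [0,T] → ℝ, v ∈ ℝ and K ≥ 0. If (I₁, V₁) and (I₂, V₂) are both solutions of the Skorohod system for (f, v, K), then I₁(t) = I₂(t) and V₁(t) = V₂(t) for all t ∈ [0,T]. -/
/-!
Two solutions differ by `D = I₁ - I₂`, an integral of `V₁ - V₂`. The reflection term `m_f(t)` is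
1-Lipschitz in `f` for the sup norm on `[0, t]`, so `|V₁ - V₂|(s) ≤ K sup_{[0,s]} |D|`. Starting
from a bound `|D| ≤ C` and integrating repeatedly gives `|D t| ≤ C (K t)^m / m!` for every `m`,
hence `D = 0`; then `V₁ = V₂` by the same Lipschitz estimate.
-/

open Set MeasureTheory Filter

/-- `(I, V)` is a solution of the multiparticle Skorohod system for data `(f, v, K)`:
with `m_i(t) = sup_{0 ≤ s ≤ t} max(-(f_i(s) + I(s)), 0)`, one has
`V(t) = -v + (K/n) ∑ᵢ m_i(t)` and `I(t) = ∫₀ᵗ V(s) ds` on `[0,T]`. -/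
def IsSkorohodSystemSol (T : ℝ) (n : ℕ) (f : Fin n → ℝ → ℝ) (v K : ℝ)
    (I V : ℝ → ℝ) : Prop :=
  ContinuousOn I (Set.Icc 0 T) ∧ ContinuousOn V (Set.Icc 0 T) ∧
  (∀ t ∈ Set.Icc 0 T,
    V t = -v + (K / (n : ℝ)) * ∑ i, mf (fun s => f i s + I s) t) ∧
  (∀ t ∈ Set.Icc 0 T, I t = ∫ s in (0:ℝ)..t, V s)

section Reflection

variable {g₁ g₂ : ℝ → ℝ} {s ε : ℝ}

lemma mf_le_mf_add (hs : 0 ≤ s) (hg₂ : ContinuousOn g₂ (Icc 0 s)) (hε : 0 ≤ ε)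
    (h : ∀ u ∈ Icc 0 s, g₂ u ≤ g₁ u + ε) : mf g₁ s ≤ mf g₂ s + ε := by
  have hbdd : BddAbove ((fun u => max (-g₂ u) 0) '' Icc 0 s) :=
    (isCompact_Icc.image_of_continuousOn (hg₂.neg.sup continuousOn_const)).bddAbove
  refine csSup_le ((nonempty_Icc.2 hs).image _) ?_
  rintro _ ⟨u, hu, rfl⟩
  calc max (-g₁ u) 0 ≤ max (-g₂ u + ε) (0 + ε) := by gcongr <;> linarith [h u hu]
    _ = max (-g₂ u) 0 + ε := max_add_add_right _ _ _
    _ ≤ mf g₂ s + ε := by gcongr; exact le_csSup hbdd ⟨u, hu, rfl⟩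

lemma abs_mf_sub_mf_le (hs : 0 ≤ s) (hg₁ : ContinuousOn g₁ (Icc 0 s))
    (hg₂ : ContinuousOn g₂ (Icc 0 s)) (h : ∀ u ∈ Icc 0 s, |g₁ u - g₂ u| ≤ ε) :
    |mf g₁ s - mf g₂ s| ≤ ε := by
  have hε : 0 ≤ ε := (abs_nonneg _).trans (h 0 ⟨le_rfl, hs⟩)
  have h₁₂ : mf g₁ s ≤ mf g₂ s + ε :=
    mf_le_mf_add hs hg₂ hε fun u hu => by linarith [(abs_le.1 (h u hu)).1]
  have h₂₁ : mf g₂ s ≤ mf g₁ s + ε :=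
    mf_le_mf_add hs hg₁ hε fun u hu => by linarith [(abs_le.1 (h u hu)).2]
  rw [abs_sub_le_iff]
  constructor <;> linarith

end Reflection

lemma integral_mul_pow_div_factorial (a t : ℝ) (m : ℕ) :
    ∫ s in (0 : ℝ)..t, a * (a * s) ^ m / m.factorial = (a * t) ^ (m + 1) / (m + 1).factorial := by
  have hm : (m.factorial : ℝ) ≠ 0 := Nat.cast_ne_zero.2 m.factorial_ne_zero
  have hfun : (fun s : ℝ => a * (a * s) ^ m / m.factorial)
      = fun s => a ^ (m + 1) / m.factorial * s ^ m := by
    ext s; ring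
  rw [hfun, intervalIntegral.integral_const_mul, integral_pow, Nat.factorial_succ]
  push_cast
  field_simp
  ring

lemma abs_le_mul_pow_div_factorial {D W : ℝ → ℝ} {T K C : ℝ} (hK : 0 ≤ K)
    (hC : ∀ t ∈ Icc 0 T, |D t| ≤ C)
    (hD : ∀ t ∈ Icc 0 T, D t = ∫ s in (0 : ℝ)..t, W s)
    (hW : ∀ s ∈ Icc 0 T, ∀ ε, (∀ u ∈ Icc 0 s, |D u| ≤ ε) → |W s| ≤ K * ε)
    (m : ℕ) : ∀ t ∈ Icc 0 T, |D t| ≤ C * ((K * t) ^ m / m.factorial) := by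
  induction m with
  | zero => simpa using hC
  | succ m ih =>
    intro t ht
    have hC0 : 0 ≤ C := (abs_nonneg _).trans (hC 0 ⟨le_rfl, ht.1.trans ht.2⟩)
    have hWs : ∀ s ∈ Ioc 0 t, ‖W s‖ ≤ C * (K * (K * s) ^ m / m.factorial) := by
      intro s hs
      have hsT : s ∈ Icc 0 T := ⟨hs.1.le, hs.2.trans ht.2⟩
      rw [Real.norm_eq_abs, mul_div_assoc, mul_left_comm]
      refine hW s hsT _ fun u ⟨hu0, hus⟩ => (ih u ⟨hu0, hus.trans hsT.2⟩).trans ?_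
      gcongr
    calc |D t| = ‖∫ s in (0 : ℝ)..t, W s‖ := by rw [hD t ht, Real.norm_eq_abs]
      _ ≤ ∫ s in (0 : ℝ)..t, C * (K * (K * s) ^ m / m.factorial) :=
        intervalIntegral.norm_integral_le_of_norm_le ht.1
          (ae_of_all _ hWs) (by apply Continuous.intervalIntegrable; fun_prop)
      _ = C * ((K * t) ^ (m + 1) / (m + 1).factorial) := by
        rw [intervalIntegral.integral_const_mul, integral_mul_pow_div_factorial]

lemma eqOn_zero_of_eq_integral_of_abs_le_mul_sup {D W : ℝ → ℝ} {T K : ℝ} (hK : 0 ≤ K)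
    (hDc : ContinuousOn D (Icc 0 T))
    (hD : ∀ t ∈ Icc 0 T, D t = ∫ s in (0 : ℝ)..t, W s)
    (hW : ∀ s ∈ Icc 0 T, ∀ ε, (∀ u ∈ Icc 0 s, |D u| ≤ ε) → |W s| ≤ K * ε) :
    EqOn D 0 (Icc 0 T) := by
  obtain ⟨C, hC⟩ := isCompact_Icc.exists_bound_of_continuousOn hDc
  intro t ht
  have hlim : Tendsto (fun m : ℕ => C * ((K * t) ^ m / m.factorial)) atTop (nhds 0) := by
    simpa using (FloorSemiring.tendsto_pow_div_factorial_atTop (K * t)).const_mul C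
  have hle : |D t| ≤ 0 := ge_of_tendsto hlim <| Eventually.of_forall fun m =>
    abs_le_mul_pow_div_factorial hK hC hD hW m t ht
  exact abs_nonpos_iff.1 hle

lemma abs_sub_le_of_isSkorohodSystemSol {T : ℝ} {n : ℕ} {f : Fin n → ℝ → ℝ} {v K : ℝ}
    {I₁ V₁ I₂ V₂ : ℝ → ℝ} (hf : ∀ i, ContinuousOn (f i) (Icc 0 T)) (hK : 0 ≤ K)
    (h₁ : IsSkorohodSystemSol T n f v K I₁ V₁) (h₂ : IsSkorohodSystemSol T n f v K I₂ V₂)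
    {s ε : ℝ} (hs : s ∈ Icc 0 T) (hε : ∀ u ∈ Icc 0 s, |(I₁ - I₂) u| ≤ ε) :
    |(V₁ - V₂) s| ≤ K * ε := by
  have hsub : Icc 0 s ⊆ Icc 0 T := Icc_subset_Icc_right hs.2
  have hmf : ∀ i, |mf (fun u => f i u + I₁ u) s - mf (fun u => f i u + I₂ u) s| ≤ ε := fun i =>
    abs_mf_sub_mf_le hs.1 (((hf i).add h₁.1).mono hsub) (((hf i).add h₂.1).mono hsub)
      fun u hu => by simpa using hε u hu
  have hε0 : 0 ≤ ε := (abs_nonneg _).trans (hε 0 ⟨le_rfl, hs.1⟩)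
  have hdiff : (V₁ - V₂) s
      = K / n * ∑ i, (mf (fun u => f i u + I₁ u) s - mf (fun u => f i u + I₂ u) s) := by
    rw [Pi.sub_apply, h₁.2.2.1 s hs, h₂.2.2.1 s hs, Finset.sum_sub_distrib]
    ring
  calc |(V₁ - V₂) s|
      = K / n * |∑ i, (mf (fun u => f i u + I₁ u) s - mf (fun u => f i u + I₂ u) s)| := by
        rw [hdiff, abs_mul, abs_of_nonneg (by positivity)]
    _ ≤ K / n * (n * ε) := by
        gcongr
        refine (Finset.abs_sum_le_sum_abs _ _).trans ?_
        exact (Finset.sum_le_sum fun i _ => hmf i).trans_eq (by simp)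
    _ ≤ K * ε := by
        rcases Nat.eq_zero_or_pos n with rfl | hn
        · simpa using mul_nonneg hK hε0
        · rw [← mul_assoc, div_mul_cancel₀ K (by positivity)]

theorem stmt_7_general (T : ℝ) (n : ℕ)
    (f : Fin n → ℝ → ℝ) (hf : ∀ i, ContinuousOn (f i) (Set.Icc 0 T))
    (v K : ℝ) (hK : 0 ≤ K)
    (I₁ V₁ I₂ V₂ : ℝ → ℝ)
    (h₁ : IsSkorohodSystemSol T n f v K I₁ V₁)
    (h₂ : IsSkorohodSystemSol T n f v K I₂ V₂) :
    ∀ t ∈ Set.Icc 0 T, I₁ t = I₂ t ∧ V₁ t = V₂ t := by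
  have hI : EqOn (I₁ - I₂) 0 (Icc 0 T) := by
    refine eqOn_zero_of_eq_integral_of_abs_le_mul_sup hK (h₁.1.sub h₂.1) (W := V₁ - V₂)
      (fun t ht => ?_) fun s hs ε hε => abs_sub_le_of_isSkorohodSystemSol hf hK h₁ h₂ hs hε
    have hsub : uIcc 0 t ⊆ Icc 0 T := by rw [uIcc_of_le ht.1]; exact Icc_subset_Icc_right ht.2
    rw [Pi.sub_apply, h₁.2.2.2 t ht, h₂.2.2.2 t ht, ← intervalIntegral.integral_sub
      (h₁.2.1.mono hsub).intervalIntegrable (h₂.2.1.mono hsub).intervalIntegrable]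
    rfl
  intro t ht
  have hV := abs_sub_le_of_isSkorohodSystemSol hf hK h₁ h₂ ht (ε := 0) fun u hu => by
    simp [hI ⟨hu.1, hu.2.trans ht.2⟩]
  constructor
  · exact sub_eq_zero.1 (hI ht)
  · simpa [sub_eq_zero] using hV

/-- Uniqueness for the multiparticle Skorohod system: any two solutions agree on `[0,T]`. -/
theorem stmt_7 (T : ℝ) (hT : 0 < T) (n : ℕ) (hn : 1 ≤ n)
    (f : Fin n → ℝ → ℝ) (hf : ∀ i, ContinuousOn (f i) (Set.Icc 0 T))
    (v K : ℝ) (hK : 0 ≤ K)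
    (I₁ V₁ I₂ V₂ : ℝ → ℝ)
    (h₁ : IsSkorohodSystemSol T n f v K I₁ V₁)
    (h₂ : IsSkorohodSystemSol T n f v K I₂ V₂) :
    ∀ t ∈ Set.Icc 0 T, I₁ t = I₂ t ∧ V₁ t = V₂ t :=
  stmt_7_general T n f hf v K hK I₁ V₁ I₂ V₂ h₁ h₂
end

section
/- Lipschitz property of the Skorohod-map velocity: fix T > 0, n ≥ 1, v ∈ ℝ, K ≥ 0, and let f = (f₁,…,f_n) and g = (g₁,…,g_n) be continuous functions on [0,T]. Let (I_f, V_f) and (I_g, V_g) be the solutions of the Skorohod system for (f, v, K) and (g, v, K) respectively. If ‖f − g‖_{[0,T]} < η, then ‖V_f − V_g‖_{[0,T]} ≤ (K η / n) exp(K T). -/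
open Set MeasureTheory

/-- The supremum norm of `h` over `[a,b]`: `‖h‖_{[a,b]} = sup_{t ∈ [a,b]} |h(t)|`. -/
noncomputable def supNorm (h : ℝ → ℝ) (a b : ℝ) : ℝ :=
  sSup ((fun t => |h t|) '' Set.Icc a b)

/-!
Write `Δ = |V_f - V_g|`. The reflection term `m` is 1-Lipschitz for the sup norm on `[0, t]`, and
`|I_f - I_g| ≤ ∫₀ᵗ Δ`, so `Δ(t) ≤ (K/n) ‖f - g‖ + K ∫₀ᵗ Δ`. Grönwall's inequality in integral form
then gives `Δ(t) ≤ (K/n) ‖f - g‖ e^{Kt}`.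
-/

open Topology

theorem supNorm_nonneg (h : ℝ → ℝ) (a b : ℝ) : 0 ≤ supNorm h a b :=
  Real.sSup_nonneg (by rintro _ ⟨t, -, rfl⟩; exact abs_nonneg _)

theorem abs_le_supNorm {h : ℝ → ℝ} {a b t : ℝ} (hh : ContinuousOn h (Icc a b))
    (ht : t ∈ Icc a b) : |h t| ≤ supNorm h a b :=
  le_csSup (isCompact_Icc.image_of_continuousOn hh.abs).bddAbove ⟨t, ht, rfl⟩

theorem supNorm_le {h : ℝ → ℝ} {a b C : ℝ} (hC : 0 ≤ C) (hle : ∀ t ∈ Icc a b, |h t| ≤ C) :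
    supNorm h a b ≤ C :=
  Real.sSup_le (by rintro _ ⟨t, ht, rfl⟩; exact hle t ht) hC

theorem mf_le_add {a b : ℝ → ℝ} {t C : ℝ} (ht : 0 ≤ t) (hb : ContinuousOn b (Icc 0 t))
    (hab : ∀ s ∈ Icc 0 t, |a s - b s| ≤ C) : mf a t ≤ mf b t + C := by
  have hbdd : BddAbove ((fun s => max (-b s) 0) '' Icc 0 t) :=
    (isCompact_Icc.image_of_continuousOn
      ((continuous_neg.max continuous_const).comp_continuousOn hb)).bddAbove
  refine csSup_le ((nonempty_Icc.2 ht).image _) ?_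
  rintro _ ⟨s, hs, rfl⟩
  show max (-a s) 0 ≤ _
  have hmax : max (-a s) 0 - max (-b s) 0 ≤ |a s - b s| :=
    calc max (-a s) 0 - max (-b s) 0 ≤ |-a s - -b s| :=
          (le_abs_self _).trans (abs_max_sub_max_le_abs _ _ _)
      _ = |a s - b s| := by rw [neg_sub_neg, abs_sub_comm]
  have hb_le : max (-b s) 0 ≤ mf b t := le_csSup hbdd ⟨s, hs, rfl⟩
  linarith [hab s hs]

theorem abs_mf_sub_mf_le_s8 {a b : ℝ → ℝ} {t C : ℝ} (ht : 0 ≤ t) (ha : ContinuousOn a (Icc 0 t))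
    (hb : ContinuousOn b (Icc 0 t)) (hab : ∀ s ∈ Icc 0 t, |a s - b s| ≤ C) :
    |mf a t - mf b t| ≤ C :=
  abs_sub_le_iff.2 ⟨by linarith [mf_le_add ht hb hab],
    by linarith [mf_le_add ht ha fun s hs => abs_sub_comm (b s) (a s) ▸ hab s hs]⟩

theorem le_mul_exp_of_le_add_mul_integral {u : ℝ → ℝ} {ε K a b : ℝ} (hK : 0 ≤ K)
    (hu : ContinuousOn u (Icc a b)) (h : ∀ t ∈ Icc a b, u t ≤ ε + K * ∫ s in a..t, u s) :
    ∀ t ∈ Icc a b, u t ≤ ε * Real.exp (K * (t - a)) := by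
  intro t ht
  have hab : a ≤ b := ht.1.trans ht.2
  have hψ : ∀ x ∈ Icc a b, ∫ s in a..x, u s ≤ gronwallBound 0 K ε (x - a) := by
    refine le_gronwallBound_of_liminf_deriv_right_le (f' := u) ?_ ?_ (by simp) ?_
    · simpa [uIcc_of_le hab] using
        intervalIntegral.continuousOn_primitive_interval' (hu.intervalIntegrable_of_Icc hab)
          left_mem_uIcc
    · intro x hx r hr
      have hmem : Icc a b ∈ 𝓝[>] x := Icc_mem_nhdsGT_of_mem hx
      exact (intervalIntegral.integral_hasDerivWithinAt_right
        ((hu.mono (Icc_subset_Icc le_rfl hx.2.le)).intervalIntegrable_of_Icc hx.1)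
        ⟨_, hmem, hu.aestronglyMeasurable measurableSet_Icc⟩
        ((hu x (Ico_subset_Icc_self hx)).mono_of_mem_nhdsWithin hmem)).liminf_right_slope_le hr
    · intro x hx
      linarith [h x (Ico_subset_Icc_self hx)]
  have hK_gronwall : K * gronwallBound 0 K ε (t - a) = ε * (Real.exp (K * (t - a)) - 1) := by
    rcases hK.eq_or_lt with rfl | hK
    · simp [gronwallBound_K0]
    · rw [gronwallBound_of_K_ne_0 hK.ne']
      field_simp
      ring
  calc u t ≤ ε + K * ∫ s in a..t, u s := h t ht
    _ ≤ ε + K * gronwallBound 0 K ε (t - a) := by gcongr; exact hψ t ht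
    _ = ε * Real.exp (K * (t - a)) := by rw [hK_gronwall]; ring

namespace IsSkorohodSystemSol

variable {T v K : ℝ} {n : ℕ} {f g : Fin n → ℝ → ℝ} {If Vf Ig Vg : ℝ → ℝ}

theorem abs_sub_le_integral (hsolf : IsSkorohodSystemSol T n f v K If Vf)
    (hsolg : IsSkorohodSystemSol T n g v K Ig Vg) {t : ℝ} (ht : t ∈ Icc 0 T) :
    |If t - Ig t| ≤ ∫ s in (0:ℝ)..t, |Vf s - Vg s| := by
  have hsub : Icc 0 t ⊆ Icc 0 T := Icc_subset_Icc le_rfl ht.2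
  rw [hsolf.2.2.2 t ht, hsolg.2.2.2 t ht, ← intervalIntegral.integral_sub
    ((hsolf.2.1.mono hsub).intervalIntegrable_of_Icc ht.1)
    ((hsolg.2.1.mono hsub).intervalIntegrable_of_Icc ht.1)]
  exact intervalIntegral.abs_integral_le_integral_abs ht.1

theorem abs_mf_sub_le (hf : ∀ i, ContinuousOn (f i) (Icc 0 T))
    (hg : ∀ i, ContinuousOn (g i) (Icc 0 T))
    (hsolf : IsSkorohodSystemSol T n f v K If Vf) (hsolg : IsSkorohodSystemSol T n g v K Ig Vg)
    {t : ℝ} (ht : t ∈ Icc 0 T) (i : Fin n) :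
    |mf (fun s => f i s + If s) t - mf (fun s => g i s + Ig s) t| ≤
      supNorm (fun s => f i s - g i s) 0 T + ∫ s in (0:ℝ)..t, |Vf s - Vg s| := by
  have hsub : Icc 0 t ⊆ Icc 0 T := Icc_subset_Icc le_rfl ht.2
  have hΔ : ContinuousOn (fun s => |Vf s - Vg s|) (Icc 0 T) := (hsolf.2.1.sub hsolg.2.1).abs
  refine abs_mf_sub_mf_le_s8 ht.1 (((hf i).add hsolf.1).mono hsub) (((hg i).add hsolg.1).mono hsub)
    fun s hs => ?_
  have hsT : s ∈ Icc 0 T := hsub hs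
  calc |(f i s + If s) - (g i s + Ig s)| ≤ |f i s - g i s| + |If s - Ig s| := by
        rw [add_sub_add_comm]; exact abs_add_le _ _
    _ ≤ supNorm (fun s => f i s - g i s) 0 T + ∫ u in (0:ℝ)..s, |Vf u - Vg u| :=
        add_le_add (abs_le_supNorm ((hf i).sub (hg i)) hsT) (hsolf.abs_sub_le_integral hsolg hsT)
    _ ≤ supNorm (fun s => f i s - g i s) 0 T + ∫ u in (0:ℝ)..t, |Vf u - Vg u| := by
        gcongr
        exact intervalIntegral.integral_mono_interval le_rfl hs.1 hs.2
          (Filter.Eventually.of_forall fun _ => abs_nonneg _)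
          ((hΔ.mono hsub).intervalIntegrable_of_Icc ht.1)

theorem abs_sub_le (hK : 0 ≤ K) (hf : ∀ i, ContinuousOn (f i) (Icc 0 T))
    (hg : ∀ i, ContinuousOn (g i) (Icc 0 T))
    (hsolf : IsSkorohodSystemSol T n f v K If Vf) (hsolg : IsSkorohodSystemSol T n g v K Ig Vg)
    {t : ℝ} (ht : t ∈ Icc 0 T) :
    |Vf t - Vg t| ≤ K * (∑ i, supNorm (fun s => f i s - g i s) 0 T) / n +
      K * ∫ s in (0:ℝ)..t, |Vf s - Vg s| := by
  set ψ := ∫ s in (0:ℝ)..t, |Vf s - Vg s|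
  have hψ : 0 ≤ ψ := intervalIntegral.integral_nonneg ht.1 fun _ _ => abs_nonneg _
  have hKn : K / n * n ≤ K := by
    rcases n.eq_zero_or_pos with rfl | hn
    · simpa using hK
    · exact (div_mul_cancel₀ K (by positivity)).le
  have hsum : |∑ i, mf (fun s => f i s + If s) t - ∑ i, mf (fun s => g i s + Ig s) t| ≤
      ∑ i, supNorm (fun s => f i s - g i s) 0 T + n * ψ := by
    rw [← Finset.sum_sub_distrib]
    refine (Finset.abs_sum_le_sum_abs _ _).trans ?_
    refine (Finset.sum_le_sum fun i _ => hsolf.abs_mf_sub_le hf hg hsolg ht i).trans_eq ?_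
    rw [Finset.sum_add_distrib, Finset.sum_const, Finset.card_univ, Fintype.card_fin,
      nsmul_eq_mul]
  have hV : Vf t - Vg t =
      K / n * (∑ i, mf (fun s => f i s + If s) t - ∑ i, mf (fun s => g i s + Ig s) t) := by
    rw [hsolf.2.2.1 t ht, hsolg.2.2.1 t ht]
    ring
  calc |Vf t - Vg t|
      = K / n * |∑ i, mf (fun s => f i s + If s) t - ∑ i, mf (fun s => g i s + Ig s) t| := by
        rw [hV, abs_mul, abs_of_nonneg (by positivity)]
    _ ≤ K / n * (∑ i, supNorm (fun s => f i s - g i s) 0 T + n * ψ) := by gcongr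
    _ = K * (∑ i, supNorm (fun s => f i s - g i s) 0 T) / n + K / n * n * ψ := by ring
    _ ≤ K * (∑ i, supNorm (fun s => f i s - g i s) 0 T) / n + K * ψ := by gcongr

end IsSkorohodSystemSol

theorem stmt_8_general (T : ℝ) (n : ℕ)
    (v K : ℝ) (hK : 0 ≤ K)
    (f g : Fin n → ℝ → ℝ)
    (hf : ∀ i, ContinuousOn (f i) (Set.Icc 0 T))
    (hg : ∀ i, ContinuousOn (g i) (Set.Icc 0 T))
    (If Vf Ig Vg : ℝ → ℝ)
    (hsolf : IsSkorohodSystemSol T n f v K If Vf)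
    (hsolg : IsSkorohodSystemSol T n g v K Ig Vg)
    (η : ℝ)
    (hη : (∑ i, supNorm (fun t => f i t - g i t) 0 T) < η) :
    supNorm (fun t => Vf t - Vg t) 0 T ≤ (K * η / (n : ℝ)) * Real.exp (K * T) := by
  have hη₀ : 0 ≤ η := (Finset.sum_nonneg fun i _ => supNorm_nonneg _ 0 T).trans hη.le
  have hgronwall := le_mul_exp_of_le_add_mul_integral (u := fun t => |Vf t - Vg t|) hK
    (hsolf.2.1.sub hsolg.2.1).abs fun t ht => hsolf.abs_sub_le hK hf hg hsolg ht
  refine supNorm_le (by positivity) fun t ht => (hgronwall t ht).trans ?_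
  rw [sub_zero]
  gcongr
  exact ht.2

/-- Lipschitz property of the Skorohod-map velocity: if `‖f - g‖_{[0,T]} < η`, then
`‖V_f - V_g‖_{[0,T]} ≤ (Kη/n) exp(KT)`. -/
theorem stmt_8 (T : ℝ) (hT : 0 < T) (n : ℕ) (hn : 1 ≤ n)
    (v K : ℝ) (hK : 0 ≤ K)
    (f g : Fin n → ℝ → ℝ)
    (hf : ∀ i, ContinuousOn (f i) (Set.Icc 0 T))
    (hg : ∀ i, ContinuousOn (g i) (Set.Icc 0 T))
    (If Vf Ig Vg : ℝ → ℝ)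
    (hsolf : IsSkorohodSystemSol T n f v K If Vf)
    (hsolg : IsSkorohodSystemSol T n g v K Ig Vg)
    (η : ℝ)
    (hη : (∑ i, supNorm (fun t => f i t - g i t) 0 T) < η) :
    supNorm (fun t => Vf t - Vg t) 0 T ≤ (K * η / (n : ℝ)) * Real.exp (K * T) :=
  stmt_8_general T n v K hK f g hf hg If Vf Ig Vg hsolf hsolg η hη
end

section
/- Bound on the barrier velocity: fix T > 0, n ≥ 1, continuous f₁,…,f_n : [0,T] → ℝ with f_i(0) ≥ 0 for each i, v ≥ 0 and K ≥ 0, and let (I, V) be the solution of the Skorohod system for (f, v, K). Then sup_{t ∈ [0,T]} |V(t)| ≤ v + K ( v T + (1/n) ∑_{i=1}^n sup_{0 ≤ s ≤ T} max(−f_i(s), 0) ). -/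
open Set MeasureTheory

/-- Bound on the barrier velocity:
`sup_{t ∈ [0,T]} |V(t)| ≤ v + K (vT + (1/n) ∑ᵢ sup_{0 ≤ s ≤ T} max(-f_i(s), 0))`. -/
theorem stmt_12 (T : ℝ) (hT : 0 < T) (n : ℕ) (hn : 1 ≤ n)
    (f : Fin n → ℝ → ℝ) (hf : ∀ i, ContinuousOn (f i) (Set.Icc 0 T))
    (hf0 : ∀ i, 0 ≤ f i 0)
    (v K : ℝ) (hv : 0 ≤ v) (hK : 0 ≤ K)
    (I V : ℝ → ℝ) (hsol : IsSkorohodSystemSol T n f v K I V) :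
    sSup ((fun t => |V t|) '' Set.Icc 0 T) ≤
      v + K * (v * T + (1 / (n : ℝ)) * ∑ i, mf (f i) T) := by
  obtain ⟨hIc, hVc, hVeq, hIeq⟩ := hsol
  have hn0 : (0:ℝ) < n := by exact_mod_cast Nat.lt_of_lt_of_le Nat.zero_lt_one hn
  have hm_nonneg : ∀ (g : ℝ → ℝ) (t : ℝ), 0 ≤ mf g t := by
    intro g t
    apply Real.sSup_nonneg
    rintro x ⟨s, -, rfl⟩
    exact le_max_right _ _
  have hvT : 0 ≤ v * T := mul_nonneg hv hT.le
  -- V ≥ -v on [0,T]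
  have hVlb : ∀ t ∈ Icc (0:ℝ) T, -v ≤ V t := by
    intro t ht
    rw [hVeq t ht]
    have h : 0 ≤ (K / n) * ∑ i, mf (fun s => f i s + I s) t :=
      mul_nonneg (div_nonneg hK hn0.le)
        (Finset.sum_nonneg fun i _ => hm_nonneg _ _)
    linarith
  -- I ≥ -(v*T) on [0,T]
  have hIlb : ∀ t ∈ Icc (0:ℝ) T, -(v*T) ≤ I t := by
    intro t ht
    rw [hIeq t ht]
    have hint : IntervalIntegrable V MeasureTheory.volume 0 t := by
      apply ContinuousOn.intervalIntegrable
      rw [uIcc_of_le ht.1]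
      exact hVc.mono (Icc_subset_Icc le_rfl ht.2)
    have h1 : ∫ s in (0:ℝ)..t, (-v : ℝ) ≤ ∫ s in (0:ℝ)..t, V s := by
      apply intervalIntegral.integral_mono_on ht.1 intervalIntegrable_const hint
      intro x hx
      exact hVlb x ⟨hx.1, hx.2.trans ht.2⟩
    rw [intervalIntegral.integral_const] at h1
    simp only [smul_eq_mul, sub_zero] at h1
    have h2 : v * t ≤ v * T := mul_le_mul_of_nonneg_left ht.2 hv
    nlinarith
  have hbdd : ∀ i, BddAbove ((fun s => max (-f i s) 0) '' Icc 0 T) := by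
    intro i
    exact IsCompact.bddAbove_image isCompact_Icc (((hf i).neg).sup continuousOn_const)
  -- bound on each m_i
  have hmb : ∀ i, ∀ t ∈ Icc (0:ℝ) T, mf (fun s => f i s + I s) t ≤ mf (f i) T + v * T := by
    intro i t ht
    have h4' : 0 ≤ mf (f i) T := hm_nonneg _ _
    apply Real.sSup_le _ (by linarith)
    rintro x ⟨s, hs, rfl⟩
    have hsT : s ∈ Icc (0:ℝ) T := ⟨hs.1, hs.2.trans ht.2⟩
    have h1 : max (-f i s) 0 ≤ mf (f i) T := le_csSup (hbdd i) ⟨s, hsT, rfl⟩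
    have h2 : -(I s) ≤ v * T := by have := hIlb s hsT; linarith
    have h3 : -f i s ≤ max (-f i s) 0 := le_max_left _ _
    have h4 : 0 ≤ mf (f i) T := hm_nonneg _ _
    simp only [max_le_iff]
    constructor
    · linarith
    · linarith
  have hsum : ∀ t ∈ Icc (0:ℝ) T,
      ∑ i, mf (fun s => f i s + I s) t ≤ (∑ i, mf (f i) T) + n * (v * T) := by
    intro t ht
    calc ∑ i, mf (fun s => f i s + I s) t ≤ ∑ i : Fin n, (mf (f i) T + v * T) :=
          Finset.sum_le_sum fun i _ => hmb i t ht
      _ = (∑ i, mf (f i) T) + n * (v * T) := by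
          rw [Finset.sum_add_distrib, Finset.sum_const]
          simp [Finset.card_univ, mul_comm]
  have hB : 0 ≤ v * T + (1 / (n:ℝ)) * ∑ i, mf (f i) T := by
    have : 0 ≤ ∑ i, mf (f i) T := Finset.sum_nonneg fun i _ => hm_nonneg _ _
    positivity
  apply Real.sSup_le _ (by nlinarith)
  rintro x ⟨t, ht, rfl⟩
  rw [abs_le]
  constructor
  · have := hVlb t ht
    nlinarith
  · rw [hVeq t ht]
    have h5 := hsum t ht
    have h6 : (K / n) * ∑ i, mf (fun s => f i s + I s) t ≤
        (K / n) * ((∑ i, mf (f i) T) + n * (v * T)) :=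
      mul_le_mul_of_nonneg_left h5 (div_nonneg hK hn0.le)
    have h7 : (K / n) * ((∑ i, mf (f i) T) + n * (v * T)) =
        K * (v * T + (1 / (n:ℝ)) * ∑ i, mf (f i) T) := by
      have hne : (n:ℝ) ≠ 0 := ne_of_gt hn0
      have h8 : K / (n:ℝ) * (n:ℝ) = K := div_mul_cancel₀ K hne
      calc K / (n:ℝ) * ((∑ i, mf (f i) T) + (n:ℝ) * (v * T))
          = (K / (n:ℝ)) * (∑ i, mf (f i) T) + (K / (n:ℝ) * (n:ℝ)) * (v * T) := by ring
        _ = K * (v * T + (1 / (n:ℝ)) * ∑ i, mf (f i) T) := by rw [h8]; ring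
    rw [h7] at h6
    linarith
end

section
/- Cauchy estimate for the dyadic Euler approximations: fix T > 0, n ≥ 1, continuous f₁,…,f_n : [0,T] → ℝ with f_i(0) ≥ 0 for each i, and K ≥ 0, with initial velocity v = 0. Then for all positive integers l < m, sup_{t ∈ [0,T]} |I^{(2^{-l})}(t) − I^{(2^{-m})}(t)| ≤ ((2 + K) ‖f‖_{[0,T]} / n) · 2^{-l} · exp(K T). -/
open Set

def IsEulerApprox (T : ℝ) (n : ℕ) (f : Fin n → ℝ → ℝ) (K ε : ℝ)
    (J : ℝ → ℝ) : Prop :=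
  (∀ t ∈ Set.Icc 0 (min ε T), J t = 0) ∧
  ∀ M : ℕ, 1 ≤ M →
    ∀ t ∈ Set.Icc ((M : ℝ) * ε) (((M : ℝ) + 1) * ε) ∩ Set.Icc (0:ℝ) T,
      J t = J ((M : ℝ) * ε) +
        (K / (n : ℝ)) *
          (∑ i, sSup ((fun u => max (-(f i u + J u)) 0) '' Set.Icc 0 ((M : ℝ) * ε))) *
          (t - (M : ℝ) * ε)

/-!
Write `δ = 2^{-m}`, `ε = rδ` with `r = 2^{m-l}`, and `A_J(a)` for the slope functional
`(K/n) ∑ᵢ sup_{[0,a]} max(-(fᵢ + J), 0)`. On a fine cell `[kδ, (k+1)δ]` both approximations are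
linear: the fine one with slope `A_{Jm}(kδ)`, the coarse one with slope `A_{Jl}(a_k)`, where
`a_k = ⌊k/r⌋ ε ≤ kδ` starts the enclosing coarse cell. Since `A` is `K`-Lipschitz in `J` for the
sup norm and monotone in `a`, the slopes differ by at most `K · sup_{[0,kδ]} |Jl - Jm| + c_k`,
with `c_k = A_{Jm}(kδ) - A_{Jm}(a_k)`. As `a_k ≥ (k - (r-1))δ`, the increments `c_k` telescope
over windows of `r - 1` cells, so `δ ∑ c_k ≤ ε K ‖f‖ / n`, and a discrete Gronwall argument
with `(1 + δK)^k ≤ e^{KT}` gives the estimate.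
-/

lemma csSup_image_le_csSup_image_add {α : Type*} {s : Set α} {g₁ g₂ : α → ℝ} {d : ℝ}
    (hs : s.Nonempty) (hg₂ : BddAbove (g₂ '' s)) (h : ∀ x ∈ s, g₁ x ≤ g₂ x + d) :
    sSup (g₁ '' s) ≤ sSup (g₂ '' s) + d :=
  csSup_le (hs.image g₁) <| forall_mem_image.2 fun x hx =>
    (h x hx).trans (add_le_add_left (le_csSup hg₂ (mem_image_of_mem g₂ hx)) d)

lemma abs_csSup_image_sub_csSup_image_le {α : Type*} {s : Set α} {g₁ g₂ : α → ℝ} {d : ℝ}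
    (hs : s.Nonempty) (hg₁ : BddAbove (g₁ '' s)) (hg₂ : BddAbove (g₂ '' s))
    (h : ∀ x ∈ s, |g₁ x - g₂ x| ≤ d) :
    |sSup (g₁ '' s) - sSup (g₂ '' s)| ≤ d := by
  refine abs_sub_le_iff.2 ⟨?_, ?_⟩ <;> rw [sub_le_iff_le_add']
  · exact csSup_image_le_csSup_image_add hs hg₂ fun x hx => by
      linarith [(abs_sub_le_iff.1 (h x hx)).1]
  · exact csSup_image_le_csSup_image_add hs hg₁ fun x hx => by
      linarith [(abs_sub_le_iff.1 (h x hx)).2]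

lemma sum_range_sub_comp_tsub_le {g : ℕ → ℝ} {B : ℝ} (hg0 : ∀ j, 0 ≤ g j)
    (hgB : ∀ j, g j ≤ B) (s k : ℕ) :
    ∑ j ∈ Finset.range k, (g j - g (j - s)) ≤ s * B := by
  have hshift : ∑ j ∈ Finset.range (k - s), g j ≤ ∑ j ∈ Finset.range k, g (j - s) :=
    calc ∑ j ∈ Finset.range (k - s), g j = ∑ j ∈ Finset.Ico s k, g (j - s) := by
          simp [Finset.sum_Ico_eq_sum_range]
      _ ≤ ∑ j ∈ Finset.range k, g (j - s) :=
          Finset.sum_le_sum_of_subset_of_nonneg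
            (by rw [Finset.range_eq_Ico]; exact Finset.Ico_subset_Ico_left s.zero_le)
            fun j _ _ => hg0 _
  have htail : ∑ j ∈ Finset.Ico (k - s) k, g j ≤ s * B :=
    calc ∑ j ∈ Finset.Ico (k - s) k, g j ≤ (Finset.Ico (k - s) k).card • B :=
          Finset.sum_le_card_nsmul _ _ _ fun j _ => hgB j
      _ ≤ s * B := by
          rw [nsmul_eq_mul, Nat.card_Ico]
          gcongr
          · exact (hg0 0).trans (hgB 0)
          · exact_mod_cast (by omega : k - (k - s) ≤ s)
  rw [Finset.sum_sub_distrib, ← Finset.sum_range_add_sum_Ico _ (Nat.sub_le k s)]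
  linarith

lemma abs_le_pow_mul_sum_of_grid_step {D : ℝ → ℝ} {b : ℕ → ℝ} {δ T a : ℝ} (ha : 1 ≤ a)
    (hb : ∀ j, 0 ≤ b j) (hD0 : D 0 = 0)
    (hstep : ∀ (k : ℕ) (d : ℝ), (∀ u ∈ Icc 0 (k * δ), |D u| ≤ d) →
      ∀ t ∈ Icc (k * δ) ((k + 1) * δ) ∩ Icc 0 T, |D t| ≤ a * d + b k) :
    ∀ (k : ℕ), ∀ t ∈ Icc 0 ((k + 1) * δ) ∩ Icc 0 T,
      |D t| ≤ a ^ k * ∑ j ∈ Finset.range (k + 1), b j := by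
  intro k
  induction k with
  | zero =>
    rintro t ⟨ht, htT⟩
    have h := hstep 0 0 (fun u hu => by simp [show u = 0 by simpa using hu, hD0]) t
      ⟨⟨by simpa using ht.1, by simpa using ht.2⟩, htT⟩
    simpa using h
  | succ k ih =>
    rintro t ⟨ht, htT⟩
    have hS : 0 ≤ a ^ k * ∑ j ∈ Finset.range (k + 1), b j :=
      mul_nonneg (pow_nonneg (zero_le_one.trans ha) k) (Finset.sum_nonneg fun j _ => hb j)
    have hbound : a * (a ^ k * ∑ j ∈ Finset.range (k + 1), b j) + b (k + 1) ≤
        a ^ (k + 1) * ∑ j ∈ Finset.range (k + 1 + 1), b j := by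
      have hpow : 1 ≤ a * a ^ k := pow_succ' a k ▸ one_le_pow₀ ha
      rw [Finset.sum_range_succ _ (k + 1), pow_succ', mul_add, ← mul_assoc]
      nlinarith [mul_le_mul_of_nonneg_right hpow (hb (k + 1))]
    push_cast at ht ⊢
    rcases le_or_gt t ((k + 1) * δ) with hle | hlt
    · refine (ih t ⟨⟨ht.1, hle⟩, htT⟩).trans (le_trans ?_ hbound)
      nlinarith [mul_le_mul_of_nonneg_right ha hS, hb (k + 1)]
    · refine le_trans ?_ hbound
      have hprev : ∀ u ∈ Icc 0 (((k + 1 : ℕ) : ℝ) * δ),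
          |D u| ≤ a ^ k * ∑ j ∈ Finset.range (k + 1), b j :=
        fun u hu => ih u ⟨by simpa using hu, hu.1, hu.2.trans (by push_cast; linarith [htT.2])⟩
      exact hstep (k + 1) _ hprev t
        ⟨⟨by push_cast; linarith, by push_cast; linarith [ht.2]⟩, htT⟩

lemma natCast_div_mul_mul_le (k r : ℕ) {δ : ℝ} (hδ : 0 ≤ δ) :
    ((k / r : ℕ) : ℝ) * (r * δ) ≤ k * δ := by
  rw [← mul_assoc]
  gcongr
  exact_mod_cast Nat.div_mul_le_self k r

section Euler

variable {T : ℝ} {n : ℕ} {f : Fin n → ℝ → ℝ} {K : ℝ}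

noncomputable def eulerSlope (n : ℕ) (f : Fin n → ℝ → ℝ) (K : ℝ) (J : ℝ → ℝ) (a : ℝ) : ℝ :=
  K / n * ∑ i, sSup ((fun u => max (-(f i u + J u)) 0) '' Icc 0 a)

lemma eulerSlope_nonneg (hK : 0 ≤ K) (J : ℝ → ℝ) (a : ℝ) : 0 ≤ eulerSlope n f K J a :=
  mul_nonneg (div_nonneg hK n.cast_nonneg) <| Finset.sum_nonneg fun _ _ =>
    Real.sSup_nonneg <| forall_mem_image.2 fun _ _ => le_max_right _ _

lemma eulerSlope_zero (hf0 : ∀ i, 0 ≤ f i 0) {J : ℝ → ℝ} (hJ0 : J 0 = 0) :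
    eulerSlope n f K J 0 = 0 := by
  simp [eulerSlope, hJ0, hf0]

lemma negPart_le_sSup_abs {g : ℝ → ℝ} (hg : ContinuousOn g (Icc 0 T)) {x y : ℝ}
    (hx : x ∈ Icc 0 T) (hy : 0 ≤ y) :
    max (-(g x + y)) 0 ≤ sSup ((fun t => |g t|) '' Icc 0 T) := by
  have hgx := le_csSup (isCompact_Icc.bddAbove_image hg.abs) (mem_image_of_mem _ hx)
  exact max_le (by linarith [neg_abs_le (g x)]) ((abs_nonneg _).trans hgx)

variable (hK : 0 ≤ K) (hf : ∀ i, ContinuousOn (f i) (Icc 0 T))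
include hf

lemma bddAbove_negPart_image {J : ℝ → ℝ} (hJ : ∀ u ∈ Icc 0 T, 0 ≤ J u) (i : Fin n) {a : ℝ}
    (ha : a ≤ T) : BddAbove ((fun u => max (-(f i u + J u)) 0) '' Icc 0 a) :=
  ⟨_, forall_mem_image.2 fun u hu =>
    negPart_le_sSup_abs (hf i) ⟨hu.1, hu.2.trans ha⟩ (hJ u ⟨hu.1, hu.2.trans ha⟩)⟩

include hK

lemma eulerSlope_le {J : ℝ → ℝ} (hJ : ∀ u ∈ Icc 0 T, 0 ≤ J u) {a : ℝ} (ha : a ≤ T) :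
    eulerSlope n f K J a ≤ K / n * ∑ i, sSup ((fun t => |f i t|) '' Icc 0 T) :=
  mul_le_mul_of_nonneg_left (Finset.sum_le_sum fun i _ =>
    Real.sSup_le (forall_mem_image.2 fun u hu =>
      negPart_le_sSup_abs (hf i) ⟨hu.1, hu.2.trans ha⟩ (hJ u ⟨hu.1, hu.2.trans ha⟩))
      (Real.sSup_nonneg <| forall_mem_image.2 fun _ _ => abs_nonneg _))
    (div_nonneg hK n.cast_nonneg)

lemma eulerSlope_monotoneOn {J : ℝ → ℝ} (hJ : ∀ u ∈ Icc 0 T, 0 ≤ J u) :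
    MonotoneOn (eulerSlope n f K J) (Icc 0 T) := fun _ ha _ hb hab =>
  mul_le_mul_of_nonneg_left (Finset.sum_le_sum fun i _ =>
    csSup_le_csSup (bddAbove_negPart_image hf hJ i hb.2) (nonempty_Icc.2 ha.1 |>.image _)
      (image_mono (Icc_subset_Icc_right hab)))
    (div_nonneg hK n.cast_nonneg)

lemma abs_eulerSlope_sub_le {J₁ J₂ : ℝ → ℝ} (hJ₁ : ∀ u ∈ Icc 0 T, 0 ≤ J₁ u)
    (hJ₂ : ∀ u ∈ Icc 0 T, 0 ≤ J₂ u) {a d : ℝ} (ha : a ∈ Icc 0 T)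
    (hd : ∀ u ∈ Icc 0 a, |J₁ u - J₂ u| ≤ d) :
    |eulerSlope n f K J₁ a - eulerSlope n f K J₂ a| ≤ K * d := by
  have hd0 : 0 ≤ d := (abs_nonneg _).trans (hd 0 ⟨le_rfl, ha.1⟩)
  have hsup : ∀ i, |sSup ((fun u => max (-(f i u + J₁ u)) 0) '' Icc 0 a) -
      sSup ((fun u => max (-(f i u + J₂ u)) 0) '' Icc 0 a)| ≤ d := fun i =>
    abs_csSup_image_sub_csSup_image_le (nonempty_Icc.2 ha.1)
      (bddAbove_negPart_image hf hJ₁ i ha.2) (bddAbove_negPart_image hf hJ₂ i ha.2) fun u hu =>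
        (abs_max_sub_max_le_abs _ _ _).trans <| by
          rw [show -(f i u + J₁ u) - -(f i u + J₂ u) = -(J₁ u - J₂ u) by ring, abs_neg]
          exact hd u hu
  rw [eulerSlope, eulerSlope, ← mul_sub, ← Finset.sum_sub_distrib, abs_mul,
    abs_of_nonneg (div_nonneg hK n.cast_nonneg)]
  calc K / n * |∑ i, _| ≤ K / n * (n * d) := by
        gcongr
        refine (Finset.abs_sum_le_sum_abs _ _).trans ?_
        simpa using Finset.sum_le_sum fun i (_ : i ∈ Finset.univ) => hsup i
    _ = K * d * (n / n) := by ring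
    _ ≤ K * d := mul_le_of_le_one_right (mul_nonneg hK hd0) (div_self_le_one _)

lemma eulerSlope_sub_eulerSlope_div_le {J : ℝ → ℝ} (hJ : ∀ u ∈ Icc 0 T, 0 ≤ J u) {r k : ℕ}
    (hr : 0 < r) {δ : ℝ} (hδ : 0 ≤ δ) (hkT : k * δ ≤ T) :
    eulerSlope n f K J (k * δ) - eulerSlope n f K J ((k / r : ℕ) * (r * δ)) ≤
      eulerSlope n f K J (min (k * δ) T) -
        eulerSlope n f K J (min ((k - (r - 1) : ℕ) * δ) T) := by
  have hlag : ((k - (r - 1) : ℕ) : ℝ) * δ ≤ ((k / r : ℕ) : ℝ) * (r * δ) := by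
    rw [← mul_assoc]
    gcongr
    have := Nat.lt_div_mul_add (a := k) hr
    exact_mod_cast (show k - (r - 1) ≤ k / r * r by omega)
  have hdiv := natCast_div_mul_mul_le k r hδ
  have hT : 0 ≤ T := (by positivity : (0 : ℝ) ≤ k * δ).trans hkT
  have hmono := eulerSlope_monotoneOn hK hf hJ ⟨le_min (by positivity) hT, min_le_right _ _⟩
    ⟨by positivity, hdiv.trans hkT⟩ ((min_le_left _ _).trans hlag)
  rw [min_eq_left hkT]
  linarith

end Euler

namespace IsEulerApprox

variable {T : ℝ} {n : ℕ} {f : Fin n → ℝ → ℝ} {K ε : ℝ} {J : ℝ → ℝ}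

lemma nonneg (hK : 0 ≤ K) (hε : 0 < ε) (hJ : IsEulerApprox T n f K ε J) :
    ∀ t ∈ Icc 0 T, 0 ≤ J t := by
  have hcell : ∀ M : ℕ, ∀ t ∈ Icc 0 (((M : ℝ) + 1) * ε) ∩ Icc 0 T, 0 ≤ J t := by
    intro M
    induction M with
    | zero =>
      rintro t ⟨ht, htT⟩
      rw [hJ.1 t ⟨ht.1, le_min (by simpa using ht.2) htT.2⟩]
    | succ M ih =>
      rintro t ⟨ht, htT⟩
      push_cast at ht
      rcases le_or_gt t ((M + 1) * ε) with hle | hlt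
      · exact ih t ⟨⟨ht.1, hle⟩, htT⟩
      have hM : (0 : ℝ) ≤ (M + 1) * ε := by positivity
      have hMT : ((M + 1 : ℕ) : ℝ) * ε ≤ T := by push_cast; linarith [htT.2]
      rw [hJ.2 (M + 1) M.succ_pos t
        ⟨⟨by push_cast; linarith, by push_cast; linarith [ht.2]⟩, htT⟩]
      have hprev := ih _
        ⟨⟨by push_cast; exact hM, by push_cast; rfl⟩, by push_cast; exact hM, hMT⟩
      have hslope := eulerSlope_nonneg (n := n) (f := f) hK J (((M + 1 : ℕ) : ℝ) * ε)
      have htM : 0 ≤ t - ((M + 1 : ℕ) : ℝ) * ε := by push_cast; linarith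
      exact add_nonneg hprev (mul_nonneg hslope htM)
  intro t ht
  obtain ⟨M, hM⟩ := exists_nat_ge (t / ε)
  exact hcell M t ⟨⟨ht.1, by nlinarith [(div_le_iff₀ hε).1 hM]⟩, ht⟩

lemma sub_eq_eulerSlope_mul (hf0 : ∀ i, 0 ≤ f i 0) (hJ : IsEulerApprox T n f K ε J) {M : ℕ}
    {s t : ℝ} (hs : s ∈ Icc ((M : ℝ) * ε) (((M : ℝ) + 1) * ε) ∩ Icc 0 T)
    (ht : t ∈ Icc ((M : ℝ) * ε) (((M : ℝ) + 1) * ε) ∩ Icc 0 T) :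
    J t - J s = eulerSlope n f K J (M * ε) * (t - s) := by
  rcases Nat.eq_zero_or_pos M with rfl | hM
  · simp only [Nat.cast_zero, zero_mul, zero_add, one_mul] at hs ht ⊢
    have hzero : ∀ u ∈ Icc 0 ε ∩ Icc 0 T, J u = 0 :=
      fun u hu => hJ.1 u ⟨hu.2.1, le_min hu.1.2 hu.2.2⟩
    have hJ0 : J 0 = 0 := hzero 0 ⟨⟨le_rfl, hs.1.1.trans hs.1.2⟩, le_rfl, hs.2.1.trans hs.2.2⟩
    rw [hzero t ht, hzero s hs, eulerSlope_zero hf0 hJ0]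
    ring
  · rw [hJ.2 M hM t ht, hJ.2 M hM s hs, eulerSlope]
    ring

end IsEulerApprox

section Comparison

variable {T : ℝ} {n : ℕ} {f : Fin n → ℝ → ℝ} {K δ : ℝ} {r : ℕ} {J₁ J₂ : ℝ → ℝ}
  (hK : 0 ≤ K) (hf : ∀ i, ContinuousOn (f i) (Icc 0 T)) (hf0 : ∀ i, 0 ≤ f i 0)
  (hr : 0 < r) (hδ : 0 < δ)
  (hJ₁ : IsEulerApprox T n f K (r * δ) J₁) (hJ₂ : IsEulerApprox T n f K δ J₂)
include hK hf hf0 hr hδ hJ₁ hJ₂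

lemma abs_eulerApprox_sub_le_step {k : ℕ} {d t : ℝ}
    (hd : ∀ u ∈ Icc 0 (k * δ), |J₁ u - J₂ u| ≤ d)
    (ht : t ∈ Icc (k * δ) ((k + 1) * δ) ∩ Icc 0 T) :
    |J₁ t - J₂ t| ≤ (1 + δ * K) * d +
      δ * (eulerSlope n f K J₂ (k * δ) - eulerSlope n f K J₂ ((k / r : ℕ) * (r * δ))) := by
  set a : ℝ := ((k / r : ℕ) : ℝ) * (r * δ)
  have hk : (k : ℝ) * δ ∈ Icc (k * δ) ((k + 1) * δ) ∩ Icc 0 T :=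
    ⟨⟨le_rfl, by linarith⟩, by positivity, ht.1.1.trans ht.2.2⟩
  have hak : a ≤ k * δ := natCast_div_mul_mul_le k r hδ.le
  have hka : ((k : ℝ) + 1) * δ ≤ (((k / r : ℕ) : ℝ) + 1) * (r * δ) := by
    rw [← mul_assoc]
    gcongr
    have := Nat.lt_div_mul_add (a := k) hr
    exact_mod_cast (show k + 1 ≤ (k / r + 1) * r by rw [add_mul, one_mul]; omega)
  have hcell : ∀ u ∈ Icc (k * δ) ((k + 1) * δ) ∩ Icc 0 T,
      u ∈ Icc a ((((k / r : ℕ) : ℝ) + 1) * (r * δ)) ∩ Icc 0 T :=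
    fun u hu => ⟨⟨hak.trans hu.1.1, hu.1.2.trans hka⟩, hu.2⟩
  have hJ₁0 := hJ₁.nonneg hK (by positivity)
  have hJ₂0 := hJ₂.nonneg hK hδ
  have e₁ := hJ₁.sub_eq_eulerSlope_mul hf0 (hcell _ hk) (hcell t ht)
  have e₂ := hJ₂.sub_eq_eulerSlope_mul hf0 hk ht
  have ha : a ∈ Icc 0 T := ⟨by positivity, hak.trans hk.2.2⟩
  have hslope : |eulerSlope n f K J₁ a - eulerSlope n f K J₂ a| ≤ K * d :=
    abs_eulerSlope_sub_le hK hf hJ₁0 hJ₂0 ha fun u hu => hd u ⟨hu.1, hu.2.trans hak⟩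
  have hmono : eulerSlope n f K J₂ a ≤ eulerSlope n f K J₂ (k * δ) :=
    eulerSlope_monotoneOn hK hf hJ₂0 ha ⟨hk.2.1, hk.2.2⟩ hak
  have htk : 0 ≤ t - k * δ := sub_nonneg.2 ht.1.1
  have htk' : t - k * δ ≤ δ := by linarith [ht.1.2]
  calc |J₁ t - J₂ t|
      = |(J₁ (k * δ) - J₂ (k * δ)) + ((eulerSlope n f K J₁ a - eulerSlope n f K J₂ a) +
          (eulerSlope n f K J₂ a - eulerSlope n f K J₂ (k * δ))) * (t - k * δ)| := by
        congr 1; linear_combination e₁ - e₂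
    _ ≤ |J₁ (k * δ) - J₂ (k * δ)| + (|eulerSlope n f K J₁ a - eulerSlope n f K J₂ a| +
          (eulerSlope n f K J₂ (k * δ) - eulerSlope n f K J₂ a)) * (t - k * δ) := by
        refine (abs_add_le _ _).trans ?_
        gcongr
        rw [abs_mul, abs_of_nonneg htk]
        gcongr
        exact (abs_add_le _ _).trans (by rw [abs_of_nonpos (sub_nonpos.2 hmono), neg_sub])
    _ ≤ d + (K * d + (eulerSlope n f K J₂ (k * δ) - eulerSlope n f K J₂ a)) * δ := by
        have hd0 : 0 ≤ d := (abs_nonneg _).trans (hd _ ⟨hk.2.1, le_rfl⟩)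
        have := sub_nonneg.2 hmono
        gcongr
        exact hd _ ⟨hk.2.1, le_rfl⟩
    _ = _ := by ring

theorem abs_eulerApprox_sub_le {t : ℝ} (ht : t ∈ Icc 0 T) :
    |J₁ t - J₂ t| ≤
      Real.exp (K * T) * (r * δ) * (K / n * ∑ i, sSup ((fun t => |f i t|) '' Icc 0 T)) := by
  set B := K / n * ∑ i, sSup ((fun t => |f i t|) '' Icc 0 T)
  have hJ₂0 := hJ₂.nonneg hK hδ
  have hmem : ∀ j : ℕ, min (j * δ) T ∈ Icc 0 T :=
    fun j => ⟨le_min (by positivity) (ht.1.trans ht.2), min_le_right _ _⟩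
  -- clipped at `T`: beyond it the slope is a junk `sSup` of a possibly unbounded set
  set g : ℕ → ℝ := fun j => eulerSlope n f K J₂ (min (j * δ) T)
  have hg : Monotone g := fun i j hij =>
    eulerSlope_monotoneOn hK hf hJ₂0 (hmem i) (hmem j) (min_le_min_right _ (by gcongr))
  set c : ℕ → ℝ := fun j => g j - g (j - (r - 1))
  have hc : ∀ j, 0 ≤ δ * c j := fun j => mul_nonneg hδ.le (sub_nonneg.2 (hg (Nat.sub_le _ _)))
  have hD0 : J₁ 0 - J₂ 0 = 0 := by
    have hT : 0 ≤ T := ht.1.trans ht.2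
    rw [hJ₁.1 0 ⟨le_rfl, le_min (by positivity) hT⟩, hJ₂.1 0 ⟨le_rfl, le_min hδ.le hT⟩,
      sub_zero]
  have hstep : ∀ (k : ℕ) (d : ℝ), (∀ u ∈ Icc 0 (k * δ), |J₁ u - J₂ u| ≤ d) →
      ∀ t ∈ Icc (k * δ) ((k + 1) * δ) ∩ Icc 0 T,
        |J₁ t - J₂ t| ≤ (1 + δ * K) * d + δ * c k := fun k d hd t ht =>
    (abs_eulerApprox_sub_le_step hK hf hf0 hr hδ hJ₁ hJ₂ hd ht).trans <| by
      gcongr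
      exact eulerSlope_sub_eulerSlope_div_le hK hf hJ₂0 hr hδ.le (ht.1.1.trans ht.2.2)
  set k := ⌊t / δ⌋₊
  have hkt : k * δ ≤ t := (le_div_iff₀ hδ).1 (Nat.floor_le (div_nonneg ht.1 hδ.le))
  have htk : t ≤ (k + 1) * δ := (div_le_iff₀ hδ).1 (Nat.lt_floor_add_one _).le
  have ha : 1 ≤ 1 + δ * K := le_add_of_nonneg_right (mul_nonneg hδ.le hK)
  have hpow : (1 + δ * K) ^ k ≤ Real.exp (K * T) :=
    calc (1 + δ * K) ^ k ≤ Real.exp (δ * K) ^ k :=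
          pow_le_pow_left₀ (by positivity) (by linarith [Real.add_one_le_exp (δ * K)]) k
      _ = Real.exp (k * (δ * K)) := (Real.exp_nat_mul _ k).symm
      _ ≤ Real.exp (K * T) := Real.exp_le_exp.2 (by nlinarith [ht.2])
  have hsum : ∑ j ∈ Finset.range (k + 1), δ * c j ≤ r * δ * B := by
    have hc_sum := sum_range_sub_comp_tsub_le (g := g) (fun j => eulerSlope_nonneg hK _ _)
      (fun j => eulerSlope_le hK hf hJ₂0 (hmem j).2) (r - 1) (k + 1)
    have hB : 0 ≤ B := (eulerSlope_nonneg hK J₂ _).trans (eulerSlope_le hK hf hJ₂0 (hmem 0).2)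
    have hr' : ((r - 1 : ℕ) : ℝ) ≤ r := by exact_mod_cast Nat.sub_le r 1
    rw [← Finset.mul_sum]
    calc δ * ∑ j ∈ Finset.range (k + 1), c j ≤ δ * ((r - 1 : ℕ) * B) := by gcongr
      _ ≤ r * δ * B := by nlinarith [mul_le_mul_of_nonneg_right hr' hB]
  calc |J₁ t - J₂ t| ≤ (1 + δ * K) ^ k * ∑ j ∈ Finset.range (k + 1), δ * c j :=
        abs_le_pow_mul_sum_of_grid_step ha hc hD0 hstep k t ⟨⟨ht.1, htk⟩, ht⟩
    _ ≤ Real.exp (K * T) * (r * δ * B) :=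
        mul_le_mul hpow hsum (Finset.sum_nonneg fun j _ => hc j) (Real.exp_pos _).le
    _ = Real.exp (K * T) * (r * δ) * B := by ring

end Comparison

theorem stmt_14_general (T : ℝ) (n : ℕ)
    (f : Fin n → ℝ → ℝ) (hf : ∀ i, ContinuousOn (f i) (Set.Icc 0 T))
    (hf0 : ∀ i, 0 ≤ f i 0) (K : ℝ) (hK : 0 ≤ K)
    (l m : ℕ) (hlm : l < m)
    (Jl Jm : ℝ → ℝ)
    (hJl : IsEulerApprox T n f K ((2 : ℝ) ^ (-(l : ℤ))) Jl)
    (hJm : IsEulerApprox T n f K ((2 : ℝ) ^ (-(m : ℤ))) Jm) :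
    sSup ((fun t => |Jl t - Jm t|) '' Set.Icc 0 T) ≤
      ((2 + K) * (∑ i, sSup ((fun t => |f i t|) '' Set.Icc 0 T)) / (n : ℝ)) *
        (2 : ℝ) ^ (-(l : ℤ)) * Real.exp (K * T) := by
  have hmesh : (2 : ℝ) ^ (-(l : ℤ)) = ((2 ^ (m - l) : ℕ) : ℝ) * 2 ^ (-(m : ℤ)) := by
    rw [Nat.cast_pow, Nat.cast_ofNat, ← zpow_natCast, ← zpow_add₀ two_ne_zero]
    congr 1
    omega
  rw [hmesh] at hJl
  have hF : 0 ≤ ∑ i, sSup ((fun t => |f i t|) '' Icc 0 T) :=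
    Finset.sum_nonneg fun _ _ => Real.sSup_nonneg <| forall_mem_image.2 fun _ _ => abs_nonneg _
  refine Real.sSup_le (forall_mem_image.2 fun t ht => ?_) (by positivity)
  calc |Jl t - Jm t| ≤ Real.exp (K * T) * (2 ^ (-(l : ℤ))) *
        (K / n * ∑ i, sSup ((fun t => |f i t|) '' Icc 0 T)) := by
        rw [hmesh]
        exact abs_eulerApprox_sub_le hK hf hf0 (by positivity) (by positivity) hJl hJm ht
    _ = K * (∑ i, sSup ((fun t => |f i t|) '' Icc 0 T)) / n * 2 ^ (-(l : ℤ)) *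
        Real.exp (K * T) := by ring
    _ ≤ _ := by gcongr; linarith

/-- Cauchy estimate for the dyadic Euler approximations: for `l < m`,
`sup_{t ∈ [0,T]} |I^{(2^{-l})}(t) - I^{(2^{-m})}(t)|
  ≤ ((2 + K) ‖f‖_{[0,T]} / n) 2^{-l} exp(KT)`. -/
theorem stmt_14 (T : ℝ) (hT : 0 < T) (n : ℕ) (hn : 1 ≤ n)
    (f : Fin n → ℝ → ℝ) (hf : ∀ i, ContinuousOn (f i) (Set.Icc 0 T))
    (hf0 : ∀ i, 0 ≤ f i 0) (K : ℝ) (hK : 0 ≤ K)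
    (l m : ℕ) (hl : 1 ≤ l) (hlm : l < m)
    (Jl Jm : ℝ → ℝ)
    (hJl : IsEulerApprox T n f K ((2 : ℝ) ^ (-(l : ℤ))) Jl)
    (hJm : IsEulerApprox T n f K ((2 : ℝ) ^ (-(m : ℤ))) Jm) :
    sSup ((fun t => |Jl t - Jm t|) '' Set.Icc 0 T) ≤
      ((2 + K) * (∑ i, sSup ((fun t => |f i t|) '' Set.Icc 0 T)) / (n : ℝ)) *
        (2 : ℝ) ^ (-(l : ℤ)) * Real.exp (K * T) :=
  stmt_14_general T n f hf hf0 K hK l m hlm Jl Jm hJl hJm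
end
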